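/- For every fixed integer d ≥ 1 and every y ∈ ℝ: m·P(χ²(d) ≥ 2 log m + (d−2) log log m + y) → e^{−y/2}/Γ(d/2) as m → ∞. -/

import Mathlib

open MeasureTheory Filter Topology

noncomputable section

/-- Upper-tail probability of the chi-squared distribution with `d` degrees of freedom. -/
def chiSqTail (d : ℕ) (x : ℝ) : ℝ :=
  ∫ t in Set.Ioi x,
    t ^ ((d : ℝ) / 2 - 1) * Real.exp (-t / 2) / (2 ^ ((d : ℝ) / 2) * Real.Gamma ((d : ℝ) / 2))

namespace ChiSqAux

open Set

lemma contOn (a : ℝ) {x : ℝ} (hx : 0 < x) :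
    ContinuousOn (fun t : ℝ => t ^ a * Real.exp (-t / 2)) (Set.Ici x) := by
  intro t ht
  have ht0 : t ≠ 0 := (hx.trans_le ht).ne'
  have h1 : ContinuousAt (fun t : ℝ => t ^ a) t :=
    Real.continuousAt_rpow_const t a (Or.inl ht0)
  have h2 : Continuous (fun t : ℝ => Real.exp (-t / 2)) := by continuity
  exact (h1.mul h2.continuousAt).continuousWithinAt

lemma integrable_aux (a : ℝ) {x : ℝ} (hx : 0 < x) :
    IntegrableOn (fun t : ℝ => t ^ a * Real.exp (-t / 2)) (Set.Ioi x) := by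
  have h0 : Tendsto (fun t : ℝ => t ^ a * Real.exp (-(4⁻¹ * t))) atTop (𝓝 0) := by
    have := tendsto_rpow_mul_exp_neg_mul_atTop_nhds_zero a 4⁻¹ (by norm_num)
    refine this.congr fun t => ?_
    congr 1
    rw [Real.exp_eq_exp]; ring
  have hev : ∀ᶠ t in atTop, t ^ a * Real.exp (-(4⁻¹ * t)) ≤ 1 :=
    h0.eventually (eventually_le_nhds zero_lt_one)
  obtain ⟨X, hX⟩ := eventually_atTop.1 hev
  set X0 : ℝ := max X x with hX0
  have hxX : x ≤ X0 := le_max_right _ _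
  have h1 : IntegrableOn (fun t : ℝ => t ^ a * Real.exp (-t / 2)) (Set.Ioc x X0) := by
    have hc : ContinuousOn (fun t : ℝ => t ^ a * Real.exp (-t / 2)) (Set.Icc x X0) :=
      (contOn a hx).mono Set.Icc_subset_Ici_self
    exact hc.integrableOn_Icc.mono_set Set.Ioc_subset_Icc_self
  have h2 : IntegrableOn (fun t : ℝ => t ^ a * Real.exp (-t / 2)) (Set.Ioi X0) := by
    have hX0pos : 0 < X0 := lt_of_lt_of_le hx hxX
    refine Integrable.mono' ((exp_neg_integrableOn_Ioi X0 (show (0:ℝ) < 4⁻¹ by norm_num)).congr_fun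
      (fun t _ => by beta_reduce; rw [neg_mul]) measurableSet_Ioi) ?_ ?_
    · exact ((contOn a hX0pos).mono Set.Ioi_subset_Ici_self).aestronglyMeasurable measurableSet_Ioi
    · filter_upwards [ae_restrict_mem measurableSet_Ioi] with t ht
      have ht0 : 0 < t := hX0pos.trans ht
      have hnn : 0 ≤ t ^ a * Real.exp (-t / 2) :=
        mul_nonneg (Real.rpow_nonneg ht0.le a) (Real.exp_pos _).le
      rw [Real.norm_of_nonneg hnn]
      have he : Real.exp (-t / 2) = Real.exp (-(4⁻¹ * t)) * Real.exp (-(4⁻¹ * t)) := by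
        rw [← Real.exp_add]; congr 1; ring
      have hb : t ^ a * Real.exp (-(4⁻¹ * t)) ≤ 1 :=
        hX t ((le_max_left X x).trans ht.le)
      calc t ^ a * Real.exp (-t / 2)
          = (t ^ a * Real.exp (-(4⁻¹ * t))) * Real.exp (-(4⁻¹ * t)) := by rw [he]; ring
        _ ≤ 1 * Real.exp (-(4⁻¹ * t)) :=
            mul_le_mul_of_nonneg_right hb (Real.exp_pos _).le
        _ = Real.exp (-(4⁻¹ * t)) := one_mul _
  have := h1.union h2
  rwa [Set.Ioc_union_Ioi_eq_Ioi hxX] at this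


lemma ibp (a : ℝ) {x : ℝ} (hx : 0 < x) :
    (∫ t in Set.Ioi x, t ^ a * Real.exp (-t / 2)) -
      2 * a * ∫ t in Set.Ioi x, t ^ (a - 1) * Real.exp (-t / 2) =
      2 * (x ^ a * Real.exp (-x / 2)) := by
  have key := integral_Ioi_of_hasDerivAt_of_tendsto'
    (f := fun t : ℝ => -2 * (t ^ a * Real.exp (-t / 2)))
    (f' := fun t : ℝ => t ^ a * Real.exp (-t / 2) - 2 * a * (t ^ (a - 1) * Real.exp (-t / 2)))
    (a := x) (m := 0) ?_ ?_ ?_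
  · rw [MeasureTheory.integral_sub (integrable_aux a hx)
      (((integrable_aux (a - 1) hx)).const_mul (2 * a)),
      MeasureTheory.integral_const_mul] at key
    rw [key]; ring
  · intro t ht
    have ht0 : 0 < t := lt_of_lt_of_le hx ht
    have h1 : HasDerivAt (fun s : ℝ => s ^ a) (a * t ^ (a - 1)) t :=
      Real.hasDerivAt_rpow_const (Or.inl ht0.ne')
    have h2 : HasDerivAt (fun s : ℝ => Real.exp (-s / 2)) (Real.exp (-t / 2) * (-1 / 2)) t := by
      have hd : HasDerivAt (fun s : ℝ => -s / 2) (-1 / 2) t := by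
        simpa using ((hasDerivAt_id t).neg.div_const 2)
      exact (Real.hasDerivAt_exp _).comp t hd
    have h3 : HasDerivAt (fun s : ℝ => -2 * (s ^ a * Real.exp (-s / 2))) _ t :=
      (h1.mul h2).const_mul (-2 : ℝ)
    refine h3.congr_deriv ?_
    ring
  · exact (integrable_aux a hx).sub ((integrable_aux (a - 1) hx).const_mul (2 * a))
  · have h0 : Tendsto (fun t : ℝ => t ^ a * Real.exp (-t / 2)) atTop (𝓝 0) := by
      refine (tendsto_rpow_mul_exp_neg_mul_atTop_nhds_zero a 2⁻¹ (by norm_num)).congr fun t => ?_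
      congr 1
      rw [Real.exp_eq_exp]; ring
    simpa using h0.const_mul (-2 : ℝ)

lemma ratio (a : ℝ) :
    Tendsto (fun x : ℝ =>
        (∫ t in Set.Ioi x, t ^ a * Real.exp (-t / 2)) / (x ^ a * Real.exp (-x / 2)))
      atTop (𝓝 2) := by
  have hc : Tendsto (fun x : ℝ => 2 * |a| / x) atTop (𝓝 0) :=
    tendsto_const_nhds.div_atTop tendsto_id
  have h2const : Tendsto (fun _ : ℝ => (2:ℝ)) atTop (𝓝 2) := tendsto_const_nhds
  have h1const : Tendsto (fun _ : ℝ => (1:ℝ)) atTop (𝓝 1) := tendsto_const_nhds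
  have hupper : Tendsto (fun x : ℝ => 2 / (1 - 2 * |a| / x)) atTop (𝓝 2) := by
    have := h2const.div (h1const.sub hc) (by norm_num : (1:ℝ) - 0 ≠ 0)
    rw [sub_zero, div_one] at this; exact this
  have hlower : Tendsto (fun x : ℝ => 2 / (1 + 2 * |a| / x)) atTop (𝓝 2) := by
    have := h2const.div (h1const.add hc) (by norm_num : (1:ℝ) + 0 ≠ 0)
    rw [add_zero, div_one] at this; exact this
  refine tendsto_of_tendsto_of_tendsto_of_le_of_le' hlower hupper ?_ ?_
  all_goals
    filter_upwards [eventually_ge_atTop (max 1 (4 * |a| + 1))] with x hxm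
  all_goals
    have hx1 : (1:ℝ) ≤ x := le_trans (le_max_left _ _) hxm
    have hx4 : 4 * |a| + 1 ≤ x := le_trans (le_max_right _ _) hxm
    have hx0 : (0:ℝ) < x := lt_of_lt_of_le one_pos hx1
    have habs : 0 ≤ |a| := abs_nonneg a
    have hfrac : 2 * |a| / x ≤ 1 / 2 := by
      rw [div_le_div_iff₀ hx0 (by norm_num)]
      nlinarith
    have hfracnn : 0 ≤ 2 * |a| / x := by positivity
    have hG : 0 < x ^ a * Real.exp (-x / 2) :=
      mul_pos (Real.rpow_pos_of_pos hx0 a) (Real.exp_pos _)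
    have hibp := ibp a hx0
    have hF1nn : 0 ≤ ∫ t in Set.Ioi x, t ^ (a - 1) * Real.exp (-t / 2) := by
      refine setIntegral_nonneg measurableSet_Ioi fun t ht => ?_
      exact mul_nonneg (Real.rpow_nonneg (hx0.trans ht).le _) (Real.exp_pos _).le
    have hFnn : 0 ≤ ∫ t in Set.Ioi x, t ^ a * Real.exp (-t / 2) := by
      refine setIntegral_nonneg measurableSet_Ioi fun t ht => ?_
      exact mul_nonneg (Real.rpow_nonneg (hx0.trans ht).le _) (Real.exp_pos _).le
    have hF1le : (∫ t in Set.Ioi x, t ^ (a - 1) * Real.exp (-t / 2)) ≤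
        (∫ t in Set.Ioi x, t ^ a * Real.exp (-t / 2)) / x := by
      have hmono : (∫ t in Set.Ioi x, t ^ (a - 1) * Real.exp (-t / 2)) ≤
          ∫ t in Set.Ioi x, t ^ a * Real.exp (-t / 2) / x := by
        refine setIntegral_mono_on (integrable_aux (a - 1) hx0)
          ((integrable_aux a hx0).div_const x) measurableSet_Ioi fun t ht => ?_
        have ht0 : 0 < t := hx0.trans ht
        rw [Real.rpow_sub ht0, Real.rpow_one, div_mul_eq_mul_div]
        exact div_le_div_of_nonneg_left
          (mul_nonneg (Real.rpow_nonneg ht0.le a) (Real.exp_pos _).le) hx0 (le_of_lt ht)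
      rwa [integral_div] at hmono
  · -- lower bound: 2 / (1 + 2|a|/x) ≤ F / G
    set F := ∫ t in Set.Ioi x, t ^ a * Real.exp (-t / 2)
    set F1 := ∫ t in Set.Ioi x, t ^ (a - 1) * Real.exp (-t / 2)
    set G := x ^ a * Real.exp (-x / 2)
    rw [div_le_div_iff₀ (by linarith) hG]
    have hlb : -(2 * |a| * (F / x)) ≤ 2 * a * F1 := by
      nlinarith [mul_nonneg (show (0:ℝ) ≤ a + |a| by linarith [neg_abs_le a]) hF1nn,
        mul_nonneg habs (sub_nonneg.2 hF1le)]
    have hrw : F * (1 + 2 * |a| / x) = F + 2 * |a| * (F / x) := by ring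
    rw [hrw]; linarith [hibp, hlb]
  · -- upper bound: F / G ≤ 2 / (1 - 2|a|/x)
    set F := ∫ t in Set.Ioi x, t ^ a * Real.exp (-t / 2)
    set F1 := ∫ t in Set.Ioi x, t ^ (a - 1) * Real.exp (-t / 2)
    set G := x ^ a * Real.exp (-x / 2)
    rw [div_le_div_iff₀ hG (by linarith)]
    have hub : 2 * a * F1 ≤ 2 * |a| * (F / x) := by
      nlinarith [mul_nonneg (sub_nonneg.2 (le_abs_self a)) hF1nn,
        mul_nonneg habs (sub_nonneg.2 hF1le)]
    have hrw : F * (1 - 2 * |a| / x) = F - 2 * |a| * (F / x) := by ring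
    rw [hrw]; linarith [hibp, hub]


end ChiSqAux

open ChiSqAux in
/-- `m · P(χ²(d) ≥ 2 log m + (d−2) log log m + y) → e^{−y/2}/Γ(d/2)` as `m → ∞`. -/
theorem chiSq_tail_asymptotics (d : ℕ) (hd : 1 ≤ d) (y : ℝ) :
    Tendsto (fun m : ℕ =>
        (m : ℝ) * chiSqTail d (2 * Real.log m + ((d : ℝ) - 2) * Real.log (Real.log m) + y))
      atTop (𝓝 (Real.exp (-y / 2) / Real.Gamma ((d : ℝ) / 2))) := by
  have hd1 : (1 : ℝ) ≤ (d : ℝ) := by exact_mod_cast hd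
  set a : ℝ := (d : ℝ) / 2 - 1 with ha
  set C : ℝ := 2 ^ ((d : ℝ) / 2) * Real.Gamma ((d : ℝ) / 2) with hCdef
  have hdpos : (0 : ℝ) < (d : ℝ) / 2 := by linarith
  have hGamma : 0 < Real.Gamma ((d : ℝ) / 2) := Real.Gamma_pos_of_pos hdpos
  have hC : 0 < C := mul_pos (Real.rpow_pos_of_pos two_pos _) hGamma
  have hchx : ∀ x : ℝ, chiSqTail d x = (∫ t in Set.Ioi x, t ^ a * Real.exp (-t / 2)) / C := by
    intro x
    rw [chiSqTail, MeasureTheory.integral_div]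
  have hlogTop : Tendsto (fun m : ℕ => Real.log (m : ℝ)) atTop atTop :=
    Real.tendsto_log_atTop.comp tendsto_natCast_atTop_atTop
  have hll : Tendsto (fun m : ℕ => Real.log (Real.log m) / Real.log m) atTop (𝓝 0) :=
    Real.isLittleO_log_id_atTop.tendsto_div_nhds_zero.comp hlogTop
  have hy0 : Tendsto (fun m : ℕ => y / Real.log m) atTop (𝓝 0) :=
    tendsto_const_nhds.div_atTop hlogTop
  have hr : Tendsto (fun m : ℕ =>
      (2 * Real.log m + ((d : ℝ) - 2) * Real.log (Real.log m) + y) / Real.log m)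
      atTop (𝓝 2) := by
    have h1 : Tendsto (fun m : ℕ =>
        2 + ((d : ℝ) - 2) * (Real.log (Real.log m) / Real.log m) + y / Real.log m)
        atTop (𝓝 (2 + ((d : ℝ) - 2) * 0 + 0)) :=
      (tendsto_const_nhds.add (hll.const_mul _)).add hy0
    rw [mul_zero, add_zero, add_zero] at h1
    refine h1.congr' ?_
    filter_upwards [hlogTop.eventually_gt_atTop 0] with m hm
    field_simp
  have hX : Tendsto (fun m : ℕ =>
      2 * Real.log m + ((d : ℝ) - 2) * Real.log (Real.log m) + y) atTop atTop :=
    Tendsto.num hlogTop two_pos hr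
  have hratio := (ChiSqAux.ratio a).comp hX
  have hpow : Tendsto (fun m : ℕ =>
      ((2 * Real.log m + ((d : ℝ) - 2) * Real.log (Real.log m) + y) / Real.log m) ^ a)
      atTop (𝓝 (2 ^ a)) := hr.rpow_const (Or.inl two_ne_zero)
  have hlim := ((hratio.mul hpow).mul (tendsto_const_nhds (x := Real.exp (-y/2)))).div_const C
  have hval : 2 * (2:ℝ) ^ a * Real.exp (-y/2) / C = Real.exp (-y / 2) / Real.Gamma ((d : ℝ) / 2) := by
    have hexp : (1:ℝ) + a = (d : ℝ) / 2 := by rw [ha]; ring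
    have h2 : 2 * (2:ℝ) ^ a = 2 ^ ((d : ℝ) / 2) := by
      rw [← hexp, Real.rpow_add two_pos, Real.rpow_one]
    rw [hCdef, ← h2, mul_div_mul_left _ _ (by positivity : 2 * (2:ℝ) ^ a ≠ 0)]
  rw [hval] at hlim
  refine hlim.congr' ?_
  filter_upwards [eventually_ge_atTop 3, hX.eventually_ge_atTop 1] with m hm3 hX1
  have hm1 : (1:ℝ) < m := by exact_mod_cast (by omega : 1 < m)
  have hm0 : (0:ℝ) < m := by linarith
  have hL0 : 0 < Real.log m := Real.log_pos hm1
  set x' : ℝ := 2 * Real.log m + ((d : ℝ) - 2) * Real.log (Real.log m) + y with hx'def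
  have hx'0 : (0:ℝ) < x' := lt_of_lt_of_le one_pos hX1
  have hG : 0 < x' ^ a * Real.exp (-x' / 2) :=
    mul_pos (Real.rpow_pos_of_pos hx'0 a) (Real.exp_pos _)
  have he : Real.exp (-x' / 2) = (↑m)⁻¹ * (Real.log m) ^ (-a) * Real.exp (-y / 2) := by
    rw [hx'def, ha]
    rw [show -(2 * Real.log (m:ℝ) + ((d : ℝ) - 2) * Real.log (Real.log m) + y) / 2
        = -Real.log (m:ℝ) + (Real.log (Real.log (m:ℝ)) * (-((d:ℝ)/2 - 1)) + -y / 2) by ring]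
    rw [Real.exp_add, Real.exp_add, Real.exp_neg, Real.exp_log hm0,
      ← Real.rpow_def_of_pos hL0]
    ring
  have hLa : (Real.log (m:ℝ)) ^ a ≠ 0 := (Real.rpow_pos_of_pos hL0 a).ne'
  have hmne : (m:ℝ) ≠ 0 := hm0.ne'
  have key : (x' / Real.log m) ^ a * Real.exp (-y / 2)
      = ↑m * (x' ^ a * Real.exp (-x' / 2)) := by
    rw [Real.div_rpow hx'0.le hL0.le, he, Real.rpow_neg hL0.le]
    field_simp
  rw [hchx x']
  set F : ℝ := ∫ t in Set.Ioi x', t ^ a * Real.exp (-t / 2) with hFdef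
  calc F / (x' ^ a * Real.exp (-x' / 2))
        * (x' / Real.log m) ^ a * Real.exp (-y / 2) / C
      = F / (x' ^ a * Real.exp (-x' / 2))
        * ((x' / Real.log m) ^ a * Real.exp (-y / 2)) / C := by ring
    _ = F / (x' ^ a * Real.exp (-x' / 2)) * (↑m * (x' ^ a * Real.exp (-x' / 2))) / C := by
        rw [key]
    _ = ↑m * (F / C) := by
        field_simp

end
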